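/- For p < 0 and z ∈ ℝ, the parabolic cylinder function defined by D_p(z) = (e^{-z²/4}/Γ(-p)) ∫₀^∞ e^{-xz - x²/2} x^{-p-1} dx satisfies the differential equation D_p''(z) + (p + 1/2 - z²/4) D_p(z) = 0. -/

import Mathlib

/-- The parabolic cylinder function `D_p(z)` for `p < 0`, via its integral
representation `D_p(z) = (e^{-z²/4}/Γ(-p)) ∫₀^∞ e^{-xz - x²/2} x^{-p-1} dx`. -/
noncomputable def pcf (p z : ℝ) : ℝ :=
  Real.exp (-z ^ 2 / 4) / Real.Gamma (-p) *
    ∫ x in Set.Ioi (0:ℝ), Real.exp (-x * z - x ^ 2 / 2) * x ^ (-p - 1)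

/-!
Write `D_p(z) = e^{-z²/4} v(z) / Γ(-p)` with `v = K_{-p-1}`, where
`K_q(z) = ∫₀^∞ e^{-xz - x²/2} x^q dx`. The substitution turns the Weber equation into
`v'' - z v' + p v = 0`. Differentiating under the integral sign gives `K_q' = -K_{q+1}`, so
`v' = -K_{-p}` and `v'' = K_{1-p}`, and integrating `d/dx (e^{-xz - x²/2} x^{-p})` over `(0, ∞)`
gives the three-term recurrence `K_{1-p} + z K_{-p} + p K_{-p-1} = 0`, which is that equation.
-/

open Real MeasureTheory Set Filter Topology

noncomputable def pcfIntegrand (q z x : ℝ) : ℝ :=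
  exp (-x * z - x ^ 2 / 2) * x ^ q

noncomputable def pcfKernel (q z : ℝ) : ℝ :=
  ∫ x in Ioi 0, pcfIntegrand q z x

namespace pcfIntegrand

lemma nonneg (q z : ℝ) {x : ℝ} (hx : 0 ≤ x) : 0 ≤ pcfIntegrand q z x := by
  unfold pcfIntegrand; positivity

lemma antitone_param (q : ℝ) {x : ℝ} (hx : 0 ≤ x) : Antitone fun z => pcfIntegrand q z x := by
  intro z w hzw
  exact mul_le_mul_of_nonneg_right (exp_le_exp.2 (by nlinarith)) (rpow_nonneg hx q)

lemma le_const_mul_gammaIntegrand (q z : ℝ) {x : ℝ} (hx : 0 ≤ x) :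
    pcfIntegrand q z x ≤ exp ((|z| + 1) ^ 2 / 2) * (exp (-x) * x ^ q) := by
  have hxz : -x * z ≤ x * |z| := by nlinarith [neg_abs_le z]
  rw [pcfIntegrand, ← mul_assoc, ← exp_add]
  gcongr
  nlinarith [sq_nonneg (x - (|z| + 1))]

lemma continuousOn (q z : ℝ) : ContinuousOn (pcfIntegrand q z) (Ioi 0) :=
  (continuous_exp.comp (by fun_prop)).continuousOn.mul
    (continuousOn_id.rpow_const fun _ hx => Or.inl (ne_of_gt hx))

lemma integrableOn {q : ℝ} (hq : -1 < q) (z : ℝ) :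
    IntegrableOn (pcfIntegrand q z) (Ioi 0) := by
  have hGamma : IntegrableOn (fun x : ℝ => exp (-x) * x ^ q) (Ioi 0) := by
    simpa using GammaIntegral_convergent (s := q + 1) (by linarith)
  refine (hGamma.const_mul (exp ((|z| + 1) ^ 2 / 2))).mono'
    ((continuousOn q z).aestronglyMeasurable measurableSet_Ioi) ?_
  filter_upwards [ae_restrict_mem measurableSet_Ioi] with x (hx : 0 < x)
  rw [norm_of_nonneg (nonneg q z hx.le)]
  exact le_const_mul_gammaIntegrand q z hx.le

lemma tendsto_atTop (q z : ℝ) : Tendsto (pcfIntegrand q z) atTop (𝓝 0) := by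
  have h : Tendsto (fun x : ℝ => exp ((|z| + 1) ^ 2 / 2) * (exp (-x) * x ^ q)) atTop (𝓝 0) := by
    simpa [mul_comm] using
      (tendsto_rpow_mul_exp_neg_mul_atTop_nhds_zero q 1 one_pos).const_mul
        (exp ((|z| + 1) ^ 2 / 2))
  refine squeeze_zero' ?_ ?_ h <;> filter_upwards [eventually_ge_atTop 0] with x hx
  exacts [nonneg q z hx, le_const_mul_gammaIntegrand q z hx]

lemma hasDerivAt_param (q : ℝ) {x : ℝ} (hx : 0 < x) (z : ℝ) :
    HasDerivAt (fun z => pcfIntegrand q z x) (-pcfIntegrand (q + 1) z x) z := by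
  refine ((((hasDerivAt_id z).const_mul (-x)).sub_const (x ^ 2 / 2)).exp.mul_const
    (x ^ q)).congr_deriv ?_
  rw [pcfIntegrand, rpow_add_one hx.ne', id, mul_one]
  ring

lemma hasDerivAt (q z : ℝ) {x : ℝ} (hx : 0 < x) :
    HasDerivAt (pcfIntegrand q z)
      (q * pcfIntegrand (q - 1) z x - z * pcfIntegrand q z x - pcfIntegrand (q + 1) z x) x := by
  have hexp : HasDerivAt (fun x : ℝ => -x * z - x ^ 2 / 2) (-z - x) x :=
    (((hasDerivAt_id x).neg.mul_const z).sub ((hasDerivAt_pow 2 x).div_const 2)).congr_deriv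
      (by norm_num)
  refine (hexp.exp.mul (hasDerivAt_rpow_const (p := q) (Or.inl hx.ne'))).congr_deriv ?_
  rw [pcfIntegrand, pcfIntegrand, pcfIntegrand, rpow_add_one hx.ne']
  ring

end pcfIntegrand

namespace pcfKernel

lemma hasDerivAt {q : ℝ} (hq : -1 < q) (z : ℝ) :
    HasDerivAt (pcfKernel q) (-pcfKernel (q + 1) z) z := by
  -- On `ball z 1` the derivative in `z` is dominated by the integrand at parameter `-(|z| + 1)`.
  have hmeas (w : ℝ) := (pcfIntegrand.continuousOn q w).aestronglyMeasurable
    (μ := volume) measurableSet_Ioi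
  have h := hasDerivAt_integral_of_dominated_loc_of_deriv_le (x₀ := z)
    (F' := fun w x => -pcfIntegrand (q + 1) w x) (Metric.ball_mem_nhds z one_pos)
    (.of_forall hmeas) (pcfIntegrand.integrableOn hq z)
    ((pcfIntegrand.continuousOn (q + 1) z).aestronglyMeasurable measurableSet_Ioi).neg ?_
    (pcfIntegrand.integrableOn (q := q + 1) (by linarith) (-(|z| + 1))) ?_
  · have h' := h.2
    rw [integral_neg] at h'
    exact h'
  all_goals filter_upwards [ae_restrict_mem measurableSet_Ioi] with x (hx : 0 < x) w hw
  · have hw : -(|z| + 1) ≤ w := by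
      have := abs_sub_abs_le_abs_sub w z
      rw [Metric.mem_ball, Real.dist_eq] at hw
      linarith [neg_abs_le w]
    rw [norm_neg, norm_of_nonneg (pcfIntegrand.nonneg _ _ hx.le)]
    exact pcfIntegrand.antitone_param _ hx.le hw
  · exact pcfIntegrand.hasDerivAt_param q hx w

lemma recurrence {q : ℝ} (hq : 0 < q) (z : ℝ) :
    pcfKernel (q + 1) z + z * pcfKernel q z = q * pcfKernel (q - 1) z := by
  have hm : IntegrableOn (fun x => q * pcfIntegrand (q - 1) z x) (Ioi 0) :=
    (pcfIntegrand.integrableOn (by linarith) z).const_mul q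
  have h0 : IntegrableOn (fun x => z * pcfIntegrand q z x) (Ioi 0) :=
    (pcfIntegrand.integrableOn (by linarith) z).const_mul z
  have hp : IntegrableOn (pcfIntegrand (q + 1) z) (Ioi 0) :=
    pcfIntegrand.integrableOn (by linarith) z
  have hcont : ContinuousWithinAt (pcfIntegrand q z) (Ici 0) 0 :=
    ((continuous_exp.comp (by fun_prop)).continuousAt.mul
      (continuousAt_rpow_const 0 q (Or.inr hq.le))).continuousWithinAt
  -- The boundary term vanishes at `0` because `q > 0`.
  have hibp := integral_Ioi_of_hasDerivAt_of_tendsto hcont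
    (fun x hx => pcfIntegrand.hasDerivAt q z hx)
    ((hm.sub h0).sub hp) (pcfIntegrand.tendsto_atTop q z)
  rw [integral_sub, integral_sub, integral_const_mul, integral_const_mul] at hibp
  · have hzero : pcfIntegrand q z 0 = 0 := by simp [pcfIntegrand, zero_rpow hq.ne']
    rw [hzero] at hibp
    unfold pcfKernel
    linarith
  exacts [hm, h0, hm.sub h0, hp]

end pcfKernel

lemma iteratedDeriv_two_exp_mul {v v' : ℝ → ℝ} {v'' z : ℝ}
    (hv : ∀ w, HasDerivAt v (v' w) w) (hv' : HasDerivAt v' v'' z) :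
    iteratedDeriv 2 (fun w => exp (-w ^ 2 / 4) * v w) z =
      exp (-z ^ 2 / 4) * (v'' - z * v' z + (z ^ 2 / 4 - 1 / 2) * v z) := by
  have hexp (w : ℝ) : HasDerivAt (fun w => exp (-w ^ 2 / 4)) (exp (-w ^ 2 / 4) * (-w / 2)) w :=
    (((hasDerivAt_pow 2 w).neg.div_const 4).congr_deriv (by ring)).exp
  have hderiv : deriv (fun w => exp (-w ^ 2 / 4) * v w) =
      fun w => exp (-w ^ 2 / 4) * (-w / 2) * v w + exp (-w ^ 2 / 4) * v' w :=
    funext fun w => ((hexp w).mul (hv w)).deriv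
  rw [iteratedDeriv_succ, iteratedDeriv_one, hderiv]
  refine HasDerivAt.deriv ?_
  refine ((((hexp z).mul ((hasDerivAt_id z).neg.div_const 2)).mul (hv z)).add
    ((hexp z).mul hv')).congr_deriv ?_
  simp only [Pi.mul_apply, Pi.neg_apply, id]
  ring

/-- For `p < 0`, `D_p` satisfies the parabolic cylinder ODE
`D_p''(z) + (p + 1/2 - z²/4) D_p(z) = 0`. -/
theorem stmt4 (p : ℝ) (hp : p < 0) :
    ∀ z : ℝ, iteratedDeriv 2 (pcf p) z + (p + 1/2 - z ^ 2 / 4) * pcf p z = 0 := by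
  intro z
  have hpcf : pcf p = fun w => exp (-w ^ 2 / 4) * (pcfKernel (-p - 1) w / Gamma (-p)) := by
    funext w
    rw [pcf, pcfKernel, mul_div_assoc', div_mul_eq_mul_div]
    rfl
  have hv (w : ℝ) : HasDerivAt (fun w => pcfKernel (-p - 1) w / Gamma (-p))
      (-pcfKernel (-p) w / Gamma (-p)) w := by
    simpa using (pcfKernel.hasDerivAt (q := -p - 1) (by linarith) w).div_const (Gamma (-p))
  have hv' : HasDerivAt (fun w => -pcfKernel (-p) w / Gamma (-p))
      (pcfKernel (-p + 1) z / Gamma (-p)) z := by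
    simpa using (pcfKernel.hasDerivAt (q := -p) (by linarith) z).neg.div_const (Gamma (-p))
  rw [hpcf, iteratedDeriv_two_exp_mul hv hv']
  linear_combination exp (-z ^ 2 / 4) / Gamma (-p) * pcfKernel.recurrence (q := -p) (by linarith) z
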